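/- arXiv:1403.5397 — 3 statements merged into one kernel-verified Lean document; each statement's English description precedes it below -/
import Mathlib

section
/- Let L : J → ℝ be a smooth Lagrangian and let Γ^i_{αβ} : J → ℝ (1 ≤ i ≤ n, 1 ≤ α,β ≤ k) be smooth functions such that at every point of J and for every i, Γ_α(∂L/∂v^i_α) − ∂L/∂q^i = 0 (sum over α), where Γ_α = ∂/∂x^α + v^i_α ∂/∂q^i + Γ^i_{αβ} ∂/∂v^i_β. If a smooth map φ : ℝ^k → ℝ^n satisfies ∂²φ^i/∂x^α∂x^β (x) = Γ^i_{αβ}(j¹φ(x)) for all i, α, β and all x ∈ ℝ^k, then φ is a solution of the Euler–Lagrange equations. -/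
/-!
Along a prolongation the chain rule gives
`∂/∂xᵅ (F ∘ j¹φ) = (∂F/∂xᵅ + vʲ_α ∂F/∂qʲ + ∂²φʲ/∂xᵅ∂xᵝ ∂F/∂vʲ_β) ∘ j¹φ`.
When the second derivatives of `φ` are given by `Γ`, this is `Γ_α(F) ∘ j¹φ`, so for
`F = ∂L/∂vⁱ_α` the hypothesis `Γ_α(∂L/∂vⁱ_α) = ∂L/∂qⁱ` turns into the Euler–Lagrange equations.
-/

open Function

noncomputable section

/-- The first jet space `J = ℝᵏ × ℝⁿ × (Fin n → Fin k → ℝ)`,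
with coordinates `(xᵅ, qⁱ, vⁱ_α)`. -/
abbrev Jet (k n : ℕ) : Type :=
  (Fin k → ℝ) × (Fin n → ℝ) × (Fin n → Fin k → ℝ)

variable {k n : ℕ}

/-- Partial derivative `∂F/∂xᵅ` of a function on the jet space. -/
noncomputable def pdX (F : Jet k n → ℝ) (α : Fin k) (z : Jet k n) : ℝ :=
  deriv (fun t => F (Function.update z.1 α t, z.2.1, z.2.2)) (z.1 α)

/-- Partial derivative `∂F/∂qⁱ` of a function on the jet space. -/
noncomputable def pdQ (F : Jet k n → ℝ) (i : Fin n) (z : Jet k n) : ℝ :=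
  deriv (fun t => F (z.1, Function.update z.2.1 i t, z.2.2)) (z.2.1 i)

/-- Partial derivative `∂F/∂vⁱ_α` of a function on the jet space. -/
noncomputable def pdV (F : Jet k n → ℝ) (i : Fin n) (α : Fin k) (z : Jet k n) : ℝ :=
  deriv (fun t => F (z.1, z.2.1,
    Function.update z.2.2 i (Function.update (z.2.2 i) α t))) (z.2.2 i α)

/-- Partial derivative `∂φⁱ/∂xᵅ` of a map `φ : ℝᵏ → ℝⁿ`. -/
noncomputable def pD (φ : (Fin k → ℝ) → (Fin n → ℝ)) (i : Fin n) (α : Fin k)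
    (x : Fin k → ℝ) : ℝ :=
  deriv (fun t => φ (Function.update x α t) i) (x α)

/-- Second partial derivative `∂²φⁱ/∂xᵅ∂xᵝ` of a map `φ : ℝᵏ → ℝⁿ`. -/
noncomputable def pD2 (φ : (Fin k → ℝ) → (Fin n → ℝ)) (i : Fin n) (α β : Fin k)
    (x : Fin k → ℝ) : ℝ :=
  deriv (fun t => pD φ i β (Function.update x α t)) (x α)

/-- First prolongation `j¹φ : ℝᵏ → J` of `φ : ℝᵏ → ℝⁿ`. -/
noncomputable def j1 (φ : (Fin k → ℝ) → (Fin n → ℝ)) (x : Fin k → ℝ) : Jet k n :=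
  (x, φ x, fun i α => pD φ i α x)

/-- `φ` is a smooth solution of the Euler–Lagrange equations of the Lagrangian `L`:
`∑_α ∂/∂xᵅ[(∂L/∂vⁱ_α) ∘ j¹φ] = (∂L/∂qⁱ) ∘ j¹φ` for all `i`. -/
def IsELSolution (L : Jet k n → ℝ) (φ : (Fin k → ℝ) → (Fin n → ℝ)) : Prop :=
  ContDiff ℝ (⊤ : ℕ∞) φ ∧
  ∀ (i : Fin n) (x : Fin k → ℝ),
    (∑ α : Fin k, deriv (fun t => pdV L i α (j1 φ (Function.update x α t))) (x α))
      = pdQ L i (j1 φ x)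

/-- `G = (G¹, …, Gᵏ)` is a conservation law for the Euler–Lagrange equations of `L`:
`∑_α ∂/∂xᵅ(Gᵅ ∘ j¹φ) = 0` for every solution `φ`. -/
def IsConservationLaw (L : Jet k n → ℝ) (G : Fin k → Jet k n → ℝ) : Prop :=
  ∀ φ : (Fin k → ℝ) → (Fin n → ℝ), IsELSolution L φ →
    ∀ x : Fin k → ℝ,
      (∑ α : Fin k, deriv (fun t => G α (j1 φ (Function.update x α t))) (x α)) = 0

open Finset

namespace Jet

def eX (α : Fin k) : Jet k n := (Pi.single α 1, 0, 0)

def eQ (i : Fin n) : Jet k n := (0, Pi.single i 1, 0)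

def eV (i : Fin n) (α : Fin k) : Jet k n := (0, 0, Pi.single i (Pi.single α 1))

theorem eq_sum_coord (w : Jet k n) :
    w = ∑ α, w.1 α • eX α + ∑ i, w.2.1 i • eQ i + ∑ i, ∑ α, w.2.2 i α • eV i α := by
  refine Prod.ext ?_ (Prod.ext ?_ ?_)
  · ext β; simp [eX, eQ, eV, Prod.fst_sum, Pi.single_apply]
  · ext j; simp [eX, eQ, eV, Prod.fst_sum, Prod.snd_sum, Pi.single_apply]
  · ext j β; simp [eX, eQ, eV, Prod.snd_sum, Finset.sum_apply, Pi.single_apply]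

end Jet

open Jet

theorem hasDerivAt_update_update {ι κ : Type*} [Fintype ι] [DecidableEq ι] [Fintype κ]
    [DecidableEq κ] (w : ι → κ → ℝ) (i : ι) (α : κ) (t : ℝ) :
    HasDerivAt (fun s => update w i (update (w i) α s)) (Pi.single i (Pi.single α 1)) t := by
  refine hasDerivAt_pi.mpr fun j => ?_
  rcases eq_or_ne j i with rfl | hj
  · simpa using hasDerivAt_update (w j) α t
  · simpa [hj] using hasDerivAt_const t (w j)

theorem pdX_eq_fderiv {F : Jet k n → ℝ} {z : Jet k n} (hF : DifferentiableAt ℝ F z)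
    (α : Fin k) : pdX F α z = fderiv ℝ F z (eX α) :=
  (hF.hasFDerivAt.comp_hasDerivAt_of_eq _ ((hasDerivAt_update z.1 α _).prodMk
    ((hasDerivAt_const _ _).prodMk (hasDerivAt_const _ _))) (by simp)).deriv

theorem pdQ_eq_fderiv {F : Jet k n → ℝ} {z : Jet k n} (hF : DifferentiableAt ℝ F z)
    (i : Fin n) : pdQ F i z = fderiv ℝ F z (eQ i) :=
  (hF.hasFDerivAt.comp_hasDerivAt_of_eq _ ((hasDerivAt_const _ _).prodMk
    ((hasDerivAt_update z.2.1 i _).prodMk (hasDerivAt_const _ _))) (by simp)).deriv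

theorem pdV_eq_fderiv {F : Jet k n → ℝ} {z : Jet k n} (hF : DifferentiableAt ℝ F z)
    (i : Fin n) (α : Fin k) : pdV F i α z = fderiv ℝ F z (eV i α) :=
  (hF.hasFDerivAt.comp_hasDerivAt_of_eq _ ((hasDerivAt_const _ _).prodMk
    ((hasDerivAt_const _ _).prodMk (hasDerivAt_update_update z.2.2 i α _))) (by simp)).deriv

theorem fderiv_apply_eq_sum_pd {F : Jet k n → ℝ} {z : Jet k n} (hF : DifferentiableAt ℝ F z)
    (w : Jet k n) :
    fderiv ℝ F z w = ∑ α, w.1 α * pdX F α z + ∑ i, w.2.1 i * pdQ F i z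
      + ∑ i, ∑ α, w.2.2 i α * pdV F i α z := by
  conv_lhs => rw [eq_sum_coord w]
  simp only [map_add, map_sum, map_smul, smul_eq_mul, pdX_eq_fderiv hF, pdQ_eq_fderiv hF,
    pdV_eq_fderiv hF]

theorem ContDiff.differentiable_pdV {F : Jet k n → ℝ} (hF : ContDiff ℝ 2 F) (i : Fin n)
    (α : Fin k) : Differentiable ℝ (pdV F i α) := by
  have hF1 : Differentiable ℝ F := hF.differentiable (by norm_num)
  have : pdV F i α = fun z => fderiv ℝ F z (eV i α) := funext fun z => pdV_eq_fderiv (hF1 z) i α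
  rw [this]
  exact ((hF.fderiv_right (m := 1) (by norm_num)).differentiable (by norm_num)).clm_apply
    (differentiable_const _)

theorem hasDerivAt_comp_update {E : Type*} [NormedAddCommGroup E] [NormedSpace ℝ E]
    {g : (Fin k → ℝ) → E} {x : Fin k → ℝ} (hg : DifferentiableAt ℝ g x) (α : Fin k) :
    HasDerivAt (fun t => g (update x α t)) (fderiv ℝ g x (Pi.single α 1)) (x α) :=
  hg.hasFDerivAt.comp_hasDerivAt_of_eq _ (hasDerivAt_update x α _) (by simp)

theorem pD_eq_fderiv {φ : (Fin k → ℝ) → (Fin n → ℝ)} {x : Fin k → ℝ}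
    (hφ : DifferentiableAt ℝ φ x) (i : Fin n) (α : Fin k) :
    pD φ i α x = fderiv ℝ φ x (Pi.single α 1) i :=
  (hasDerivAt_pi.mp (hasDerivAt_comp_update hφ α) i).deriv

theorem hasDerivAt_j1_update {φ : (Fin k → ℝ) → (Fin n → ℝ)} (hφ : ContDiff ℝ 2 φ)
    (x : Fin k → ℝ) (α : Fin k) :
    HasDerivAt (fun t => j1 φ (update x α t))
      (Pi.single α 1, fun j => pD φ j α x, fun j β => pD2 φ j α β x) (x α) := by
  have hφ1 : Differentiable ℝ φ := hφ.differentiable (by norm_num)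
  set P : (Fin k → ℝ) → Fin n → Fin k → ℝ := fun y j β => fderiv ℝ φ y (Pi.single β 1) j
  have hP : Differentiable ℝ P := by
    have hDφ := (hφ.fderiv_right (m := 1) (by norm_num)).differentiable (by norm_num)
    exact differentiable_pi.mpr fun j => differentiable_pi.mpr fun β =>
      differentiable_pi.mp (hDφ.clm_apply (differentiable_const _)) j
  have hpD : ∀ j β, pD φ j β = fun y => P y j β :=
    fun j β => funext fun y => pD_eq_fderiv (hφ1 y) j β
  have hj1 : j1 φ = fun y => (y, φ y, P y) := by
    funext y
    simp only [j1, hpD]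
  have hPx := hasDerivAt_comp_update (hP x) α
  have hpD2 : ∀ j β, pD2 φ j α β x = fderiv ℝ P x (Pi.single α 1) j β := fun j β => by
    rw [pD2, hpD]
    exact (hasDerivAt_pi.mp (hasDerivAt_pi.mp hPx j) β).deriv
  have hP' : HasDerivAt (fun t => P (update x α t)) (fun j β => pD2 φ j α β x) (x α) :=
    hPx.congr_deriv (funext fun j => funext fun β => (hpD2 j β).symm)
  have hφ' : HasDerivAt (fun t => φ (update x α t)) (fun j => pD φ j α x) (x α) :=
    (hasDerivAt_comp_update (hφ1 x) α).congr_deriv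
      (funext fun j => (pD_eq_fderiv (hφ1 x) j α).symm)
  rw [hj1]
  exact (hasDerivAt_update x α _).prodMk (hφ'.prodMk hP')

theorem deriv_comp_j1_update {F : Jet k n → ℝ} {φ : (Fin k → ℝ) → (Fin n → ℝ)}
    {x : Fin k → ℝ} (hF : DifferentiableAt ℝ F (j1 φ x)) (hφ : ContDiff ℝ 2 φ) (α : Fin k) :
    deriv (fun t => F (j1 φ (update x α t))) (x α)
      = pdX F α (j1 φ x) + ∑ j, pD φ j α x * pdQ F j (j1 φ x)
        + ∑ j, ∑ β, pD2 φ j α β x * pdV F j β (j1 φ x) := by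
  have hchain := hF.hasFDerivAt.comp_hasDerivAt_of_eq _ (hasDerivAt_j1_update hφ x α) (by simp)
  refine hchain.deriv.trans ?_
  rw [fderiv_apply_eq_sum_pd hF]
  simp [Pi.single_apply]

theorem statement0_general (k n : ℕ)
    (L : Jet k n → ℝ) (hL : ContDiff ℝ (⊤ : ℕ∞) L)
    (Γ : Fin n → Fin k → Fin k → Jet k n → ℝ)
    (hsopdeEL : ∀ (z : Jet k n) (i : Fin n),
      (∑ α : Fin k,
        (pdX (pdV L i α) α z
          + ∑ j : Fin n, z.2.2 j α * pdQ (pdV L i α) j z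
          + ∑ j : Fin n, ∑ β : Fin k, Γ j α β z * pdV (pdV L i α) j β z))
        - pdQ L i z = 0)
    (φ : (Fin k → ℝ) → (Fin n → ℝ)) (hφ : ContDiff ℝ (⊤ : ℕ∞) φ)
    (hsol : ∀ (i : Fin n) (α β : Fin k) (x : Fin k → ℝ),
      pD2 φ i α β x = Γ i α β (j1 φ x)) :
    IsELSolution L φ := by
  refine ⟨hφ, fun i x => ?_⟩
  have hL2 : ContDiff ℝ 2 L := hL.of_le (WithTop.coe_le_coe.mpr le_top)
  have hφ2 : ContDiff ℝ 2 φ := hφ.of_le (WithTop.coe_le_coe.mpr le_top)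
  rw [← sub_eq_zero.mp (hsopdeEL (j1 φ x) i)]
  refine sum_congr rfl fun α _ => ?_
  rw [deriv_comp_j1_update (hL2.differentiable_pdV i α _) hφ2]
  simp only [hsol, j1]

/-- if an integrable SOPDE with coefficients `Γ` satisfies
`Γ_α(∂L/∂vⁱ_α) − ∂L/∂qⁱ = 0` everywhere, then any `φ` whose second jet solves the
second-order system defined by `Γ` is a solution of the Euler–Lagrange equations. -/
theorem statement0 (k n : ℕ) (hk : 1 ≤ k) (hn : 1 ≤ n)
    (L : Jet k n → ℝ) (hL : ContDiff ℝ (⊤ : ℕ∞) L)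
    (Γ : Fin n → Fin k → Fin k → Jet k n → ℝ)
    (hΓ : ∀ i α β, ContDiff ℝ (⊤ : ℕ∞) (Γ i α β))
    (hsopdeEL : ∀ (z : Jet k n) (i : Fin n),
      (∑ α : Fin k,
        (pdX (pdV L i α) α z
          + ∑ j : Fin n, z.2.2 j α * pdQ (pdV L i α) j z
          + ∑ j : Fin n, ∑ β : Fin k, Γ j α β z * pdV (pdV L i α) j β z))
        - pdQ L i z = 0)
    (φ : (Fin k → ℝ) → (Fin n → ℝ)) (hφ : ContDiff ℝ (⊤ : ℕ∞) φ)
    (hsol : ∀ (i : Fin n) (α β : Fin k) (x : Fin k → ℝ),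
      pD2 φ i α β x = Γ i α β (j1 φ x)) :
    IsELSolution L φ :=
  statement0_general k n L hL Γ hsopdeEL φ hφ hsol
end
end

section
/- Let L : J → ℝ be a smooth regular Lagrangian, i.e. at every point of J the (nk)×(nk) matrix with entries ∂²L/∂v^i_α ∂v^j_β (rows indexed by pairs (i,α), columns by (j,β)) is invertible. Let X^i_α, X^i_{αβ} : J → ℝ be smooth functions such that at every point of J, for all j and β: ∑_{i,α} (v^i_α − X^i_α) · ∂²L/∂v^j_β ∂v^i_α = 0 (this is the third of the coordinate equations obtained by expanding dx^α(X_β) = δ^α_β and i_{X_α}Ω^α_L = (k−1)dL for the k-vector field X_α = ∂/∂x^α + X^i_α ∂/∂q^i + X^i_{αβ} ∂/∂v^i_β). Then X^i_α = v^i_α at every point of J, i.e. the k-vector field X is a SOPDE. -/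
open Function

noncomputable section

variable {k n : ℕ}

abbrev velocityHessian (L : Jet k n → ℝ) (z : Jet k n) :
    Matrix (Fin n × Fin k) (Fin n × Fin k) ℝ :=
  Matrix.of fun p q => pdV (pdV L q.1 q.2) p.1 p.2 z

theorem eq_zero_of_sum_mul_velocityHessian_eq_zero {L : Jet k n → ℝ} {z : Jet k n}
    (hreg : IsUnit (velocityHessian L z)) {c : Fin n → Fin k → ℝ}
    (hc : ∀ j β, ∑ i, ∑ α, c i α * pdV (pdV L j β) i α z = 0) : c = 0 := by
  have hvecMul :
      Matrix.vecMul (fun p : Fin n × Fin k => c p.1 p.2) (velocityHessian L z) = 0 := by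
    ext q
    simpa [Matrix.vecMul, dotProduct, Fintype.sum_prod_type] using hc q.1 q.2
  have hzero :=
    Matrix.vecMul_injective_of_isUnit hreg (hvecMul.trans (Matrix.zero_vecMul _).symm)
  funext i α
  exact congrFun hzero (i, α)

theorem statement3_general (k n : ℕ)
    (L : Jet k n → ℝ)
    (hreg : ∀ z : Jet k n,
      IsUnit (Matrix.of fun p q : Fin n × Fin k => pdV (pdV L q.1 q.2) p.1 p.2 z))
    (X : Fin n → Fin k → Jet k n → ℝ)
    (heq3 : ∀ (z : Jet k n) (j : Fin n) (β : Fin k),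
      (∑ i : Fin n, ∑ α : Fin k,
        (z.2.2 i α - X i α z) * pdV (pdV L j β) i α z) = 0) :
    ∀ (z : Jet k n) (i : Fin n) (α : Fin k), X i α z = z.2.2 i α := by
  intro z i α
  have hsopde := eq_zero_of_sum_mul_velocityHessian_eq_zero (c := fun i α => z.2.2 i α - X i α z)
    (hreg z) (heq3 z)
  exact (sub_eq_zero.mp (congrFun (congrFun hsopde i) α)).symm

/-- for a regular Lagrangian, any `k`-vector field satisfying the third
coordinate equation coming from `dxᵅ(X_β) = δᵅ_β`, `i_{X_α}Ωᵅ_L = (k−1)dL` is a SOPDE,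
i.e. `Xⁱ_α = vⁱ_α`. -/
theorem statement3 (k n : ℕ) (hk : 1 ≤ k) (hn : 1 ≤ n)
    (L : Jet k n → ℝ) (hL : ContDiff ℝ (⊤ : ℕ∞) L)
    (hreg : ∀ z : Jet k n,
      IsUnit (Matrix.of fun p q : Fin n × Fin k => pdV (pdV L q.1 q.2) p.1 p.2 z))
    (X : Fin n → Fin k → Jet k n → ℝ)
    (hX : ∀ i α, ContDiff ℝ (⊤ : ℕ∞) (X i α))
    (W : Fin n → Fin k → Fin k → Jet k n → ℝ)
    (hW : ∀ i α β, ContDiff ℝ (⊤ : ℕ∞) (W i α β))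
    (heq3 : ∀ (z : Jet k n) (j : Fin n) (β : Fin k),
      (∑ i : Fin n, ∑ α : Fin k,
        (z.2.2 i α - X i α z) * pdV (pdV L j β) i α z) = 0) :
    ∀ (z : Jet k n) (i : Fin n) (α : Fin k), X i α z = z.2.2 i α :=
  statement3_general k n L hreg X heq3
end
end

section
/- (Conservation law for the minimal surface equation from the variational symmetry X = −q ∂/∂x¹ − q ∂/∂x² + (x¹+x²) ∂/∂q.) Let φ : ℝ² → ℝ be a smooth solution of the minimal surface equation (1 + (∂₂φ)²) ∂₁₁φ − 2 ∂₁φ ∂₂φ ∂₁₂φ + (1 + (∂₁φ)²) ∂₂₂φ = 0. Write p = ∂₁φ, r = ∂₂φ, W = √(1 + p² + r²). Define G¹, G² : ℝ² → ℝ by G¹ = (−φ(1 + r² − p r) + (x¹+x²) p)/W and G² = (−φ(1 + p² − p r) + (x¹+x²) r)/W. Then ∂G¹/∂x¹ + ∂G²/∂x² = 0 identically on ℝ². -/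
open Function

noncomputable section

/-- Partial derivative `∂φ/∂xᵅ` of a scalar field `φ : ℝ² → ℝ`. -/
noncomputable def dphi (φ : (Fin 2 → ℝ) → ℝ) (α : Fin 2) (x : Fin 2 → ℝ) : ℝ :=
  deriv (fun t => φ (Function.update x α t)) (x α)

/-- Second partial derivative `∂²φ/∂xᵅ∂xᵝ` of a scalar field `φ : ℝ² → ℝ`. -/
noncomputable def d2phi (φ : (Fin 2 → ℝ) → ℝ) (α β : Fin 2) (x : Fin 2 → ℝ) : ℝ :=
  deriv (fun t => dphi φ β (Function.update x α t)) (x α)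

/-- The component `G¹ = (−φ(1 + r² − pr) + (x¹+x²)p)/W` with `p = ∂₁φ`, `r = ∂₂φ`,
`W = √(1 + p² + r²)`. -/
noncomputable def G1 (φ : (Fin 2 → ℝ) → ℝ) (y : Fin 2 → ℝ) : ℝ :=
  (-(φ y) * (1 + (dphi φ 1 y)^2 - dphi φ 0 y * dphi φ 1 y)
      + (y 0 + y 1) * dphi φ 0 y)
    / Real.sqrt (1 + (dphi φ 0 y)^2 + (dphi φ 1 y)^2)

/-- The component `G² = (−φ(1 + p² − pr) + (x¹+x²)r)/W` with `p = ∂₁φ`, `r = ∂₂φ`,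
`W = √(1 + p² + r²)`. -/
noncomputable def G2 (φ : (Fin 2 → ℝ) → ℝ) (y : Fin 2 → ℝ) : ℝ :=
  (-(φ y) * (1 + (dphi φ 0 y)^2 - dphi φ 0 y * dphi φ 1 y)
      + (y 0 + y 1) * dphi φ 1 y)
    / Real.sqrt (1 + (dphi φ 0 y)^2 + (dphi φ 1 y)^2)

/-!
Noether's identity: `∂₁G¹ + ∂₂G² = Q (∂₁(p/W) + ∂₂(r/W)) = Q E / W³`, where
`Q = (x¹ + x²) + φ (p + r)` is the characteristic of `X` and `E` the minimal surface operator.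
After the quotient rule this is a polynomial identity in the 2-jet of `φ` (and `W² = 1 + p² + r²`),
once the mixed partials `∂₁₂φ = ∂₂₁φ` are identified.
-/

theorem HasFDerivAt.hasDerivAt_update {ι F : Type*} [Fintype ι] [DecidableEq ι]
    [NormedAddCommGroup F] [NormedSpace ℝ F] {f : (ι → ℝ) → F} {f' : (ι → ℝ) →L[ℝ] F}
    {x : ι → ℝ} (hf : HasFDerivAt f f' x) (i : ι) :
    HasDerivAt (fun t => f (update x i t)) (f' (Pi.single i 1)) (x i) := by
  rw [← update_eq_self i x] at hf
  simpa [comp_def] using hf.comp_hasDerivAt (x i) (_root_.hasDerivAt_update x i (x i))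

theorem dphi_eq_fderiv {φ : (Fin 2 → ℝ) → ℝ} {x : Fin 2 → ℝ} (hφ : DifferentiableAt ℝ φ x)
    (α : Fin 2) : dphi φ α x = fderiv ℝ φ x (Pi.single α 1) :=
  (hφ.hasFDerivAt.hasDerivAt_update α).deriv

theorem hasDerivAt_dphi {φ : (Fin 2 → ℝ) → ℝ} {x : Fin 2 → ℝ} (hφ : DifferentiableAt ℝ φ x)
    (α : Fin 2) : HasDerivAt (fun t => φ (update x α t)) (dphi φ α x) (x α) := by
  rw [dphi_eq_fderiv hφ]
  exact hφ.hasFDerivAt.hasDerivAt_update α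

theorem contDiff_dphi {n : WithTop ℕ∞} {φ : (Fin 2 → ℝ) → ℝ} (hφ : ContDiff ℝ (n + 1) φ)
    (β : Fin 2) : ContDiff ℝ n (dphi φ β) := by
  have hd : Differentiable ℝ φ := hφ.differentiable (by simp)
  rw [show dphi φ β = fun y => fderiv ℝ φ y (Pi.single β 1) from
    funext fun y => dphi_eq_fderiv (hd y) β]
  exact (hφ.fderiv_right le_rfl).clm_apply contDiff_const

theorem dphi_dphi (φ : (Fin 2 → ℝ) → ℝ) (α β : Fin 2) : dphi (dphi φ β) α = d2phi φ α β :=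
  rfl

theorem d2phi_eq_fderiv_fderiv {φ : (Fin 2 → ℝ) → ℝ} (hφ : ContDiff ℝ 2 φ) (α β : Fin 2)
    (x : Fin 2 → ℝ) :
    d2phi φ α β x = fderiv ℝ (fderiv ℝ φ) x (Pi.single α 1) (Pi.single β 1) := by
  have hd : Differentiable ℝ φ := hφ.differentiable (by simp)
  have hdd : Differentiable ℝ (fderiv ℝ φ) :=
    (hφ.fderiv_right (m := 1) (by norm_num)).differentiable one_ne_zero
  rw [← dphi_dphi, dphi_eq_fderiv ((contDiff_dphi (n := 1) hφ β).differentiable one_ne_zero x),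
    show dphi φ β = fun y => fderiv ℝ φ y (Pi.single β 1) from
      funext fun y => dphi_eq_fderiv (hd y) β,
    fderiv_clm_apply (hdd x) (differentiableAt_const _)]
  simp

theorem d2phi_comm {φ : (Fin 2 → ℝ) → ℝ} (hφ : ContDiff ℝ 2 φ) (x : Fin 2 → ℝ) :
    d2phi φ 1 0 x = d2phi φ 0 1 x := by
  rw [d2phi_eq_fderiv_fderiv hφ, d2phi_eq_fderiv_fderiv hφ]
  exact hφ.contDiffAt.isSymmSndFDerivAt (by simp) _ _

def fluxNum (q s u v : ℝ) : ℝ :=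
  -q * (1 + v ^ 2 - u * v) + s * u

/-- `Θ_L(X¹)` in the jet coordinates `q = φ`, `s = x¹ + x²` and slopes `u`, `v`: `G¹` is the flux
with `(u, v) = (p, r)` and `G²` the one with `(u, v) = (r, p)`. -/
def flux (q s u v : ℝ) : ℝ :=
  fluxNum q s u v / √(1 + u ^ 2 + v ^ 2)

/-- The quotient rule for `flux`, with `W' = (u u' + v v') / W`. -/
def fluxDeriv (q s u v q' s' u' v' : ℝ) : ℝ :=
  (-q' * (1 + v ^ 2 - u * v) - q * (2 * v * v' - u' * v - u * v') + s' * u + s * u'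
      - fluxNum q s u v * (u * u' + v * v') / (1 + u ^ 2 + v ^ 2)) / √(1 + u ^ 2 + v ^ 2)

theorem HasDerivAt.flux {q s u v : ℝ → ℝ} {q' s' u' v' t : ℝ} (hq : HasDerivAt q q' t)
    (hs : HasDerivAt s s' t) (hu : HasDerivAt u u' t) (hv : HasDerivAt v v' t) :
    HasDerivAt (fun t => flux (q t) (s t) (u t) (v t))
      (fluxDeriv (q t) (s t) (u t) (v t) q' s' u' v') t := by
  have hW : 0 < 1 + u t ^ 2 + v t ^ 2 := by positivity
  have hN := (hq.neg.mul (((hasDerivAt_const t 1).add (hv.pow 2)).sub (hu.mul hv))).add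
    (hs.mul hu)
  have hsqrt := (((hasDerivAt_const t 1).add (hu.pow 2)).add (hv.pow 2)).sqrt hW.ne'
  refine (hN.div hsqrt (Real.sqrt_pos.2 hW).ne').congr_deriv ?_
  have hsq := Real.sq_sqrt hW.le
  simp only [fluxDeriv, fluxNum, Pi.add_apply, Pi.sub_apply, Pi.mul_apply, Pi.neg_apply,
    Pi.pow_apply]
  field_simp
  rw [hsq]
  ring

theorem fluxDeriv_add_fluxDeriv (q s p r a b c : ℝ) :
    fluxDeriv q s p r p 1 a b + fluxDeriv q s r p r 1 c b
      = (s + q * (p + r)) * ((1 + r ^ 2) * a - 2 * p * r * b + (1 + p ^ 2) * c)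
        / √(1 + p ^ 2 + r ^ 2) ^ 3 := by
  have hW : 0 < 1 + p ^ 2 + r ^ 2 := by positivity
  have hsq := Real.sq_sqrt hW.le
  rw [fluxDeriv, fluxDeriv, fluxNum, fluxNum, add_right_comm 1 (r ^ 2)]
  field_simp
  rw [hsq]
  ring

theorem G2_eq_flux (φ : (Fin 2 → ℝ) → ℝ) (y : Fin 2 → ℝ) :
    G2 φ y = flux (φ y) (y 0 + y 1) (dphi φ 1 y) (dphi φ 0 y) := by
  rw [G2, flux, fluxNum, mul_comm (dphi φ 1 y), add_right_comm 1 (dphi φ 1 y ^ 2)]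

theorem hasDerivAt_update_add (x : Fin 2 → ℝ) (α : Fin 2) :
    HasDerivAt (fun t => update x α t 0 + update x α t 1) 1 (x α) := by
  have h := hasDerivAt_pi.1 (hasDerivAt_update x α (x α))
  refine ((h 0).add (h 1)).congr_deriv ?_
  fin_cases α <;> simp

theorem hasDerivAt_flux_update {φ : (Fin 2 → ℝ) → ℝ} (hφ : ContDiff ℝ 2 φ) (x : Fin 2 → ℝ)
    (α β γ : Fin 2) :
    HasDerivAt (fun t => flux (φ (update x α t)) (update x α t 0 + update x α t 1)
        (dphi φ β (update x α t)) (dphi φ γ (update x α t)))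
      (fluxDeriv (φ x) (x 0 + x 1) (dphi φ β x) (dphi φ γ x)
        (dphi φ α x) 1 (d2phi φ α β x) (d2phi φ α γ x)) (x α) := by
  have hdphi (δ : Fin 2) : Differentiable ℝ (dphi φ δ) :=
    (contDiff_dphi (n := 1) hφ δ).differentiable one_ne_zero
  have h := (hasDerivAt_dphi (hφ.differentiable two_ne_zero x) α).flux
    (hasDerivAt_update_add x α) (hasDerivAt_dphi (hdphi β x) α) (hasDerivAt_dphi (hdphi γ x) α)
  simpa only [update_eq_self, dphi_dphi] using h

/-- conservation law for the minimal surface equation coming from the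
variational symmetry `X = −q∂/∂x¹ − q∂/∂x² + (x¹+x²)∂/∂q`: if `φ` solves
`(1 + (∂₂φ)²)∂₁₁φ − 2∂₁φ∂₂φ∂₁₂φ + (1 + (∂₁φ)²)∂₂₂φ = 0`, then
`∂G¹/∂x¹ + ∂G²/∂x² = 0` identically on `ℝ²`. -/
theorem statement15 (φ : (Fin 2 → ℝ) → ℝ) (hφ : ContDiff ℝ (⊤ : ℕ∞) φ)
    (hms : ∀ x : Fin 2 → ℝ,
      (1 + (dphi φ 1 x)^2) * d2phi φ 0 0 x
        - 2 * dphi φ 0 x * dphi φ 1 x * d2phi φ 0 1 x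
        + (1 + (dphi φ 0 x)^2) * d2phi φ 1 1 x = 0) :
    ∀ x : Fin 2 → ℝ,
      deriv (fun t => G1 φ (Function.update x 0 t)) (x 0)
      + deriv (fun t => G2 φ (Function.update x 1 t)) (x 1)
      = 0 := by
  intro x
  have hφ2 : ContDiff ℝ 2 φ := hφ.of_le (by norm_cast)
  have h1 : deriv (fun t => G1 φ (update x 0 t)) (x 0)
      = fluxDeriv (φ x) (x 0 + x 1) (dphi φ 0 x) (dphi φ 1 x)
          (dphi φ 0 x) 1 (d2phi φ 0 0 x) (d2phi φ 0 1 x) :=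
    (hasDerivAt_flux_update hφ2 x 0 0 1).deriv
  have h2 : deriv (fun t => G2 φ (update x 1 t)) (x 1)
      = fluxDeriv (φ x) (x 0 + x 1) (dphi φ 1 x) (dphi φ 0 x)
          (dphi φ 1 x) 1 (d2phi φ 1 1 x) (d2phi φ 1 0 x) := by
    simp_rw [G2_eq_flux]
    exact (hasDerivAt_flux_update hφ2 x 1 1 0).deriv
  rw [h1, h2, d2phi_comm hφ2, fluxDeriv_add_fluxDeriv, hms x, mul_zero, zero_div]
end
end
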